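/- arXiv:2208.04785 — 9 statements merged into one kernel-verified Lean document; each statement's English description precedes it below -/
import Mathlib

section
/- Let E be a real Banach space, let a < b be real numbers, and let f : ℝ → E be twice continuously differentiable on [a, b]. Then ‖(f(b) − f(a))/(b − a) − f′(b)‖² ≤ (b − a)·∫_a^b ‖f″(s)‖² ds. -/
open Set MeasureTheory intervalIntegral

/-- Cauchy–Schwarz for interval integrals of continuous real functions. -/
lemma cs_interval (a b : ℝ) (hab : a ≤ b) (u v : ℝ → ℝ)
    (hu : ContinuousOn u (Set.Icc a b)) (hv : ContinuousOn v (Set.Icc a b)) :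
    (∫ t in a..b, u t * v t) ^ 2 ≤ (∫ t in a..b, u t ^ 2) * (∫ t in a..b, v t ^ 2) := by
  have huIcc : Set.uIcc a b = Set.Icc a b := Set.uIcc_of_le hab
  have hu2 : IntervalIntegrable (fun t => u t ^ 2) volume a b := by
    apply ContinuousOn.intervalIntegrable; rw [huIcc]; exact (hu.pow 2)
  have hv2 : IntervalIntegrable (fun t => v t ^ 2) volume a b := by
    apply ContinuousOn.intervalIntegrable; rw [huIcc]; exact (hv.pow 2)
  have huv : IntervalIntegrable (fun t => u t * v t) volume a b := by
    apply ContinuousOn.intervalIntegrable; rw [huIcc]; exact hu.mul hv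
  set A := ∫ t in a..b, u t ^ 2 with hA
  set B := ∫ t in a..b, u t * v t with hB
  set C := ∫ t in a..b, v t ^ 2 with hC
  have key : ∀ x : ℝ, 0 ≤ A * (x * x) + (2 * B) * x + C := by
    intro x
    have h1 : A * (x * x) + (2 * B) * x + C
        = ∫ t in a..b, (x ^ 2 * u t ^ 2 + 2 * x * (u t * v t) + v t ^ 2) := by
      rw [intervalIntegral.integral_add ((hu2.const_mul _).add (huv.const_mul _)) hv2,
        intervalIntegral.integral_add (hu2.const_mul _) (huv.const_mul _),
        intervalIntegral.integral_const_mul, intervalIntegral.integral_const_mul]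
      ring
    rw [h1]
    apply intervalIntegral.integral_nonneg hab
    intro t _
    have : x ^ 2 * u t ^ 2 + 2 * x * (u t * v t) + v t ^ 2 = (x * u t + v t) ^ 2 := by ring
    rw [this]; positivity
  have hd := discrim_le_zero key
  rw [discrim] at hd
  nlinarith [hd]

/-- Backward-Euler consistency bound for one step: if `f` is twice continuously
differentiable on `[a, b]`, then
`‖(f(b) − f(a))/(b − a) − f′(b)‖² ≤ (b − a)·∫_a^b ‖f″(s)‖² ds`. -/
theorem backward_euler_consistency_one_step
    {E : Type*} [NormedAddCommGroup E] [NormedSpace ℝ E] [CompleteSpace E]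
    (a b : ℝ) (hab : a < b) (f f' f'' : ℝ → E)
    (hf' : ∀ t ∈ Set.Icc a b, HasDerivWithinAt f (f' t) (Set.Icc a b) t)
    (hf'' : ∀ t ∈ Set.Icc a b, HasDerivWithinAt f' (f'' t) (Set.Icc a b) t)
    (hcont : ContinuousOn f'' (Set.Icc a b)) :
    ‖(b - a)⁻¹ • (f b - f a) - f' b‖ ^ 2 ≤ (b - a) * ∫ s in a..b, ‖f'' s‖ ^ 2 := by
  have hab' : a ≤ b := hab.le
  have hba : (0:ℝ) < b - a := by linarith
  have huIcc : Set.uIcc a b = Set.Icc a b := Set.uIcc_of_le hab'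
  -- continuity of f and f' on Icc
  have hfc : ContinuousOn f (Set.Icc a b) := fun t ht => (hf' t ht).continuousWithinAt
  have hf'c : ContinuousOn f' (Set.Icc a b) := fun t ht => (hf'' t ht).continuousWithinAt
  -- G t = (t - a) • f' t - f t has derivative (t - a) • f'' t
  set G : ℝ → E := fun t => (t - a) • f' t - f t with hG
  have hGderiv : ∀ t ∈ Set.Icc a b,
      HasDerivWithinAt G ((t - a) • f'' t) (Set.Icc a b) t := by
    intro t ht
    have h1 : HasDerivWithinAt (fun y : ℝ => y - a) 1 (Set.Icc a b) t :=
      (hasDerivAt_id t).sub_const a |>.hasDerivWithinAt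
    have h2 := (h1.smul (hf'' t ht)).sub (hf' t ht)
    refine h2.congr_deriv ?_
    simp
  have hGcont : ContinuousOn G (Set.Icc a b) :=
    (((continuousOn_id.sub continuousOn_const).smul hf'c).sub hfc)
  have hint : IntervalIntegrable (fun t => (t - a) • f'' t) volume a b := by
    apply ContinuousOn.intervalIntegrable; rw [huIcc]
    exact (continuousOn_id.sub continuousOn_const).smul hcont
  have hFTC : (∫ t in a..b, (t - a) • f'' t) = G b - G a := by
    apply intervalIntegral.integral_eq_sub_of_hasDeriv_right_of_le hab' hGcont _ hint
    intro x hx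
    have hxIcc : x ∈ Set.Icc a b := Set.mem_Icc_of_Ioo hx
    have := (hGderiv x hxIcc).hasDerivAt (Icc_mem_nhds hx.1 hx.2)
    exact this.hasDerivWithinAt
  have hGval : G b - G a = (b - a) • f' b - (f b - f a) := by
    simp [hG]; abel
  -- norm identity
  have hvec : (b - a)⁻¹ • (f b - f a) - f' b
      = -((b - a)⁻¹ • ∫ t in a..b, (t - a) • f'' t) := by
    rw [hFTC, hGval]
    match_scalars <;> field_simp
  rw [hvec, norm_neg, norm_smul, Real.norm_eq_abs, abs_of_pos (inv_pos.mpr hba)]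
  -- bound the norm of the integral
  have hnorm : ‖∫ t in a..b, (t - a) • f'' t‖ ≤ ∫ t in a..b, (t - a) * ‖f'' t‖ := by
    refine le_trans (intervalIntegral.norm_integral_le_integral_norm hab') ?_
    apply le_of_eq
    apply intervalIntegral.integral_congr
    intro t ht
    rw [huIcc] at ht
    show ‖(t - a) • f'' t‖ = (t - a) * ‖f'' t‖
    rw [norm_smul, Real.norm_eq_abs, abs_of_nonneg (by linarith [ht.1])]
  have hucont : ContinuousOn (fun t : ℝ => t - a) (Set.Icc a b) :=
    continuousOn_id.sub continuousOn_const
  have hvcont : ContinuousOn (fun t : ℝ => ‖f'' t‖) (Set.Icc a b) := hcont.norm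
  have hCS := cs_interval a b hab' _ _ hucont hvcont
  -- ∫ (t-a)^2 ≤ (b-a)^3
  have hI1 : (∫ t in a..b, (t - a) ^ 2) ≤ (b - a) ^ 2 * (b - a) := by
    have := intervalIntegral.integral_mono_on (μ := volume)
      (f := fun t : ℝ => (t - a) ^ 2) (g := fun _ : ℝ => (b - a) ^ 2) hab'
      (by apply ContinuousOn.intervalIntegrable; rw [huIcc]; exact hucont.pow 2)
      (_root_.intervalIntegrable_const)
      (fun t ht => by show (t - a) ^ 2 ≤ (b - a) ^ 2; nlinarith [ht.1, ht.2])
    simpa [mul_comm] using this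
  have hI2 : (0:ℝ) ≤ ∫ t in a..b, ‖f'' t‖ ^ 2 :=
    intervalIntegral.integral_nonneg hab' (fun t _ => by positivity)
  have hI3 : (0:ℝ) ≤ ∫ t in a..b, (t - a) * ‖f'' t‖ :=
    intervalIntegral.integral_nonneg hab'
      (fun t ht => mul_nonneg (by linarith [ht.1]) (norm_nonneg _))
  have hn0 : (0:ℝ) ≤ ‖∫ t in a..b, (t - a) • f'' t‖ := norm_nonneg _
  have hsq : ‖∫ t in a..b, (t - a) • f'' t‖ ^ 2
      ≤ (b - a) ^ 2 * (b - a) * ∫ t in a..b, ‖f'' t‖ ^ 2 := by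
    calc ‖∫ t in a..b, (t - a) • f'' t‖ ^ 2
        ≤ (∫ t in a..b, (t - a) * ‖f'' t‖) ^ 2 := by nlinarith
      _ ≤ (∫ t in a..b, (t - a) ^ 2) * ∫ t in a..b, ‖f'' t‖ ^ 2 := hCS
      _ ≤ (b - a) ^ 2 * (b - a) * ∫ t in a..b, ‖f'' t‖ ^ 2 := by nlinarith
  have hinv : ((b - a)⁻¹) ^ 2 * ((b - a) ^ 2 * (b - a)) = b - a := by
    field_simp
  calc ((b - a)⁻¹ * ‖∫ t in a..b, (t - a) • f'' t‖) ^ 2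
      = ((b - a)⁻¹) ^ 2 * ‖∫ t in a..b, (t - a) • f'' t‖ ^ 2 := by ring
    _ ≤ ((b - a)⁻¹) ^ 2 * ((b - a) ^ 2 * (b - a) * ∫ t in a..b, ‖f'' t‖ ^ 2) := by
        apply mul_le_mul_of_nonneg_left hsq (by positivity)
    _ = (b - a) * ∫ t in a..b, ‖f'' t‖ ^ 2 := by rw [← mul_assoc, hinv]
end

section
/- Let E be a real Banach space, let τ > 0 and N be a positive integer, set t_i = i·τ, and let f : ℝ → E be twice continuously differentiable on [0, N·τ]. Then for every 1 ≤ n ≤ N, ∑_{i=1}^n τ·‖∂_τ f(t_i) − f′(t_i)‖² ≤ τ²·∫_0^{t_n} ‖f″(s)‖² ds, where ∂_τ f(t_i) := (f(t_i) − f(t_{i−1}))/τ is the backward difference quotient. -/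
open MeasureTheory intervalIntegral

/-- Cauchy–Schwarz for interval integrals of nonnegative continuous functions. -/
lemma sq_intervalIntegral_le_aux {g : ℝ → ℝ} {a b : ℝ} (hab : a ≤ b)
    (hg : ContinuousOn g (Set.Icc a b)) (hg0 : ∀ x ∈ Set.Icc a b, 0 ≤ g x) :
    (∫ s in a..b, g s) ^ 2 ≤ (b - a) * ∫ s in a..b, g s ^ 2 := by
  set μ : Measure ℝ := volume.restrict (Set.Ioc a b) with hμ
  haveI : IsFiniteMeasure μ := by
    constructor
    rw [hμ, Measure.restrict_apply_univ, Real.volume_Ioc]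
    exact ENNReal.ofReal_lt_top
  have hmeas : AEStronglyMeasurable g μ :=
    (hg.mono Set.Ioc_subset_Icc_self).aestronglyMeasurable measurableSet_Ioc
  obtain ⟨C, hC⟩ := (isCompact_Icc (a := a) (b := b)).exists_bound_of_continuousOn hg
  have hg2 : MemLp g (ENNReal.ofReal 2) μ := by
    have htop : MemLp g ⊤ μ := by
      apply memLp_top_of_bound hmeas C
      rw [hμ, ae_restrict_iff' measurableSet_Ioc]
      exact Filter.Eventually.of_forall fun x hx => hC x (Set.Ioc_subset_Icc_self hx)
    exact htop.mono_exponent le_top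
  have h1 : MemLp (fun _ : ℝ => (1 : ℝ)) (ENNReal.ofReal 2) μ := memLp_const 1
  have hg0' : 0 ≤ᵐ[μ] g := by
    refine (ae_restrict_iff' measurableSet_Ioc).mpr ?_
    exact Filter.Eventually.of_forall fun x hx => hg0 x (Set.Ioc_subset_Icc_self hx)
  have hconj : Real.HolderConjugate 2 2 := by
    constructor <;> norm_num
  have key := MeasureTheory.integral_mul_le_Lp_mul_Lq_of_nonneg hconj
    (Filter.Eventually.of_forall fun _ => zero_le_one) hg0' h1 hg2
  simp only [one_mul, Real.rpow_two, Real.one_rpow, one_pow] at key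
  have hμuniv : ∫ _ : ℝ, (1 : ℝ) ∂μ = b - a := by
    rw [MeasureTheory.integral_const, hμ, measureReal_def, Measure.restrict_apply_univ, Real.volume_Ioc,
      smul_eq_mul, mul_one, ENNReal.toReal_ofReal (by linarith)]
  rw [hμuniv] at key
  have hInt : ∫ s in a..b, g s = ∫ x, g x ∂μ := by
    rw [intervalIntegral.integral_of_le hab, hμ]
  have hInt2 : ∫ s in a..b, g s ^ 2 = ∫ x, g x ^ 2 ∂μ := by
    rw [intervalIntegral.integral_of_le hab, hμ]
  rw [hInt, hInt2]
  have hB : 0 ≤ ∫ x, g x ^ 2 ∂μ := integral_nonneg fun x => sq_nonneg _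
  have hA : 0 ≤ ∫ x, g x ∂μ := integral_nonneg_of_ae hg0'
  calc (∫ x, g x ∂μ) ^ 2 ≤ ((b - a) ^ (1 / (2:ℝ)) * (∫ x, g x ^ 2 ∂μ) ^ (1 / (2:ℝ))) ^ 2 :=
        pow_le_pow_left₀ hA key 2
    _ = (b - a) * ∫ x, g x ^ 2 ∂μ := by
        rw [mul_pow, ← Real.rpow_natCast ((b-a) ^ (1/(2:ℝ))) 2,
          ← Real.rpow_natCast ((∫ x, g x ^ 2 ∂μ) ^ (1/(2:ℝ))) 2,
          ← Real.rpow_mul (by linarith), ← Real.rpow_mul hB]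
        norm_num

lemma taylor_err_aux {E : Type*} [NormedAddCommGroup E] [NormedSpace ℝ E] [CompleteSpace E]
    {T a b : ℝ} (f f' f'' : ℝ → E)
    (hf' : ∀ t ∈ Set.Icc (0 : ℝ) T, HasDerivWithinAt f (f' t) (Set.Icc (0 : ℝ) T) t)
    (hf'' : ∀ t ∈ Set.Icc (0 : ℝ) T, HasDerivWithinAt f' (f'' t) (Set.Icc (0 : ℝ) T) t)
    (hcont : ContinuousOn f'' (Set.Icc (0 : ℝ) T))
    (ha : 0 ≤ a) (hab : a < b) (hbT : b ≤ T) :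
    ‖(b - a)⁻¹ • (f b - f a) - f' b‖ ≤ ∫ s in a..b, ‖f'' s‖ := by
  have haT : (0:ℝ) ≤ T := ha.trans (hab.le.trans hbT)
  have hsub : Set.Icc a b ⊆ Set.Icc (0:ℝ) T := Set.Icc_subset_Icc ha hbT
  have hfc : ContinuousOn f (Set.Icc (0:ℝ) T) := fun t ht => (hf' t ht).continuousWithinAt
  have hf'c : ContinuousOn f' (Set.Icc (0:ℝ) T) := fun t ht => (hf'' t ht).continuousWithinAt
  have hmem : ∀ x ∈ Set.Ico a b, Set.Icc (0:ℝ) T ∈ nhdsWithin x (Set.Ioi x) := by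
    intro x hx
    refine Filter.mem_of_superset (Ioc_mem_nhdsGT_of_mem ⟨le_refl x, lt_of_lt_of_le hx.2 hbT⟩) ?_
    exact fun y hy => ⟨ha.trans (hx.1.trans hy.1.le), hy.2⟩
  have hint : IntervalIntegrable f' MeasureTheory.volume a b := by
    apply ContinuousOn.intervalIntegrable
    rw [Set.uIcc_of_le hab.le]; exact hf'c.mono hsub
  have hintn : IntervalIntegrable (fun s => ‖f'' s‖) MeasureTheory.volume a b := by
    apply ContinuousOn.intervalIntegrable
    rw [Set.uIcc_of_le hab.le]; exact (hcont.mono hsub).norm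
  have FTC1 : ∫ s in a..b, f' s = f b - f a := by
    apply intervalIntegral.integral_eq_sub_of_hasDeriv_right_of_le hab.le (hfc.mono hsub) _ hint
    intro x hx
    have hxI : x ∈ Set.Icc (0:ℝ) T := ⟨ha.trans hx.1.le, hx.2.le.trans hbT⟩
    exact (hf' x hxI).mono_of_mem_nhdsWithin (hmem x ⟨hx.1.le, hx.2⟩)
  set C := ∫ s in a..b, ‖f'' s‖ with hC
  have hfd : ∀ s ∈ Set.Icc a b, ‖f' s - f' b‖ ≤ C := by
    intro s hs
    have hsb : s ≤ b := hs.2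
    have FTC2 : ∫ u in s..b, f'' u = f' b - f' s := by
      apply intervalIntegral.integral_eq_sub_of_hasDeriv_right_of_le hsb
        (hf'c.mono ((Set.Icc_subset_Icc hs.1 le_rfl).trans hsub))
      · intro x hx
        have hxI : x ∈ Set.Icc (0:ℝ) T := ⟨(ha.trans hs.1).trans hx.1.le, hx.2.le.trans hbT⟩
        exact (hf'' x hxI).mono_of_mem_nhdsWithin (hmem x ⟨hs.1.trans hx.1.le, hx.2⟩)
      · apply ContinuousOn.intervalIntegrable
        rw [Set.uIcc_of_le hsb]
        exact hcont.mono ((Set.Icc_subset_Icc hs.1 le_rfl).trans hsub)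
    rw [norm_sub_rev, ← FTC2]
    calc ‖∫ u in s..b, f'' u‖ ≤ ∫ u in s..b, ‖f'' u‖ :=
          intervalIntegral.norm_integral_le_integral_norm hsb
      _ ≤ C := by
          apply intervalIntegral.integral_mono_interval hs.1 hsb le_rfl _ hintn
          refine (MeasureTheory.ae_restrict_iff' measurableSet_Ioc).mpr ?_
          exact Filter.Eventually.of_forall fun x _ => norm_nonneg _
  have hba : b - a ≠ 0 := by linarith
  have herr : (b - a)⁻¹ • (f b - f a) - f' b
      = (b - a)⁻¹ • (∫ s in a..b, (f' s - f' b)) := by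
    rw [intervalIntegral.integral_sub hint intervalIntegrable_const,
      intervalIntegral.integral_const, FTC1, smul_sub, smul_sub, smul_smul,
      inv_mul_cancel₀ hba, one_smul, smul_sub]
  rw [herr, norm_smul, norm_inv, Real.norm_eq_abs, abs_of_pos (by linarith : (0:ℝ) < b - a)]
  have hnormint : ‖∫ s in a..b, (f' s - f' b)‖ ≤ C * |b - a| := by
    apply intervalIntegral.norm_integral_le_of_norm_le_const
    intro x hx
    rw [Set.uIoc_of_le hab.le] at hx
    exact hfd x (Set.Ioc_subset_Icc_self hx)
  calc (b - a)⁻¹ * ‖∫ s in a..b, (f' s - f' b)‖ ≤ (b - a)⁻¹ * (C * |b - a|) := by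
        apply mul_le_mul_of_nonneg_left hnormint (inv_nonneg.mpr (by linarith))
    _ = C := by
        rw [abs_of_pos (by linarith : (0:ℝ) < b - a)]
        field_simp

/-- Accumulated backward-Euler consistency estimate: with `t_i = i·τ` and `f`
twice continuously differentiable on `[0, N·τ]`, for `1 ≤ n ≤ N`,
`∑_{i=1}^n τ·‖∂_τ f(t_i) − f′(t_i)‖² ≤ τ²·∫_0^{t_n} ‖f″(s)‖² ds`. -/
theorem backward_euler_accumulated_consistency
    {E : Type*} [NormedAddCommGroup E] [NormedSpace ℝ E] [CompleteSpace E]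
    (τ : ℝ) (hτ : 0 < τ) (N : ℕ) (hN : 0 < N) (f f' f'' : ℝ → E)
    (hf' : ∀ t ∈ Set.Icc (0 : ℝ) (N * τ), HasDerivWithinAt f (f' t) (Set.Icc (0 : ℝ) (N * τ)) t)
    (hf'' : ∀ t ∈ Set.Icc (0 : ℝ) (N * τ), HasDerivWithinAt f' (f'' t) (Set.Icc (0 : ℝ) (N * τ)) t)
    (hcont : ContinuousOn f'' (Set.Icc (0 : ℝ) (N * τ))) :
    ∀ n : ℕ, 1 ≤ n → n ≤ N →
      ∑ i ∈ Finset.Icc 1 n,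
          τ * ‖τ⁻¹ • (f ((i : ℝ) * τ) - f (((i : ℝ) - 1) * τ)) - f' ((i : ℝ) * τ)‖ ^ 2
        ≤ τ ^ 2 * ∫ s in (0 : ℝ)..((n : ℝ) * τ), ‖f'' s‖ ^ 2 := by
  intro n hn1 hnN
  have hterm : ∀ i ∈ Finset.Icc 1 n,
      τ * ‖τ⁻¹ • (f ((i : ℝ) * τ) - f (((i : ℝ) - 1) * τ)) - f' ((i : ℝ) * τ)‖ ^ 2
      ≤ τ ^ 2 * ∫ s in (((i : ℝ) - 1) * τ)..((i : ℝ) * τ), ‖f'' s‖ ^ 2 := by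
    intro i hi
    obtain ⟨hi1, hin⟩ := Finset.mem_Icc.mp hi
    have hi1' : (1 : ℝ) ≤ (i : ℝ) := by exact_mod_cast hi1
    have hiN : (i : ℝ) ≤ (N : ℝ) := by exact_mod_cast hin.trans hnN
    set a := ((i : ℝ) - 1) * τ with haa
    set b := (i : ℝ) * τ with hbb
    have ha : 0 ≤ a := mul_nonneg (by linarith) hτ.le
    have hab : a < b := by
      rw [haa, hbb]
      exact mul_lt_mul_of_pos_right (by linarith) hτ
    have hbT : b ≤ (N : ℝ) * τ := mul_le_mul_of_nonneg_right hiN hτ.le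
    have hba : b - a = τ := by rw [haa, hbb]; ring
    have hsub : Set.Icc a b ⊆ Set.Icc (0 : ℝ) ((N : ℝ) * τ) := Set.Icc_subset_Icc ha hbT
    have h1 := taylor_err_aux f f' f'' hf' hf'' hcont ha hab hbT
    rw [hba] at h1
    have h2 := sq_intervalIntegral_le_aux hab.le ((hcont.mono hsub).norm)
      (fun x _ => norm_nonneg _)
    have hCnn : (0 : ℝ) ≤ ∫ s in a..b, ‖f'' s‖ := by
      apply intervalIntegral.integral_nonneg hab.le
      exact fun x _ => norm_nonneg _
    calc τ * ‖τ⁻¹ • (f b - f a) - f' b‖ ^ 2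
        ≤ τ * (∫ s in a..b, ‖f'' s‖) ^ 2 := by
          apply mul_le_mul_of_nonneg_left _ hτ.le
          exact pow_le_pow_left₀ (norm_nonneg _) h1 2
      _ ≤ τ * ((b - a) * ∫ s in a..b, ‖f'' s‖ ^ 2) := mul_le_mul_of_nonneg_left h2 hτ.le
      _ = τ ^ 2 * ∫ s in a..b, ‖f'' s‖ ^ 2 := by rw [hba]; ring
  refine (Finset.sum_le_sum hterm).trans ?_
  rw [← Finset.mul_sum]
  apply le_of_eq
  congr 1
  have hint : ∀ k, k < n → IntervalIntegrable (fun s => ‖f'' s‖ ^ 2) MeasureTheory.volume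
      ((k : ℝ) * τ) (((k : ℕ) + 1 : ℝ) * τ) := by
    intro k hk
    apply ContinuousOn.intervalIntegrable
    have hle : (k : ℝ) * τ ≤ ((k : ℝ) + 1) * τ :=
      mul_le_mul_of_nonneg_right (by linarith) hτ.le
    rw [Set.uIcc_of_le hle]
    refine ((hcont.mono ?_).norm).pow 2
    apply Set.Icc_subset_Icc (mul_nonneg (Nat.cast_nonneg k) hτ.le)
    have : ((k : ℝ) + 1) ≤ (N : ℝ) := by
      have : (k : ℕ) + 1 ≤ N := Nat.succ_le_of_lt (lt_of_lt_of_le hk hnN)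
      exact_mod_cast this
    exact mul_le_mul_of_nonneg_right this hτ.le
  have hadj := intervalIntegral.sum_integral_adjacent_intervals
    (a := fun k => (k : ℝ) * τ) (n := n) (f := fun s => ‖f'' s‖ ^ 2)
    (μ := MeasureTheory.volume) (by
      intro k hk
      have := hint k hk
      push_cast at this ⊢
      convert this using 2)
  rw [← Finset.Ico_add_one_right_eq_Icc, Finset.sum_Ico_eq_sum_range]
  rw [show (0:ℝ) = ((0:ℕ):ℝ) * τ by norm_num] 
  rw [← hadj]
  apply Finset.sum_congr rfl
  intro k _
  congr 1 <;> push_cast <;> ring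
end

section
/- Let E be a real Banach space, let τ > 0 and N be a positive integer, set t_i = i·τ, and let f : ℝ → E be continuously differentiable on [0, N·τ]. Then for every 1 ≤ n ≤ N, ∑_{i=1}^n τ·‖∂_τ f(t_i)‖² ≤ ∫_0^{t_n} ‖f′(s)‖² ds, where ∂_τ f(t_i) := (f(t_i) − f(t_{i−1}))/τ is the backward difference quotient. -/
open MeasureTheory Set intervalIntegral

lemma cs_aux {g : ℝ → ℝ} {a b : ℝ} (hab : a ≤ b)
    (hg : ContinuousOn g (Set.Icc a b)) (hg0 : ∀ x, 0 ≤ g x) :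
    (∫ s in a..b, g s) ^ 2 ≤ (b - a) * ∫ s in a..b, g s ^ 2 := by
  set μ := volume.restrict (Set.Ioc a b) with hμ
  have hpq : (2:ℝ).HolderConjugate 2 := ⟨by norm_num, by norm_num, by norm_num⟩
  have hmeas : AEStronglyMeasurable g μ :=
    (hg.mono Ioc_subset_Icc_self).aestronglyMeasurable measurableSet_Ioc
  have hint2 : IntervalIntegrable (fun s => g s ^ 2) volume a b := by
    apply ContinuousOn.intervalIntegrable
    rw [uIcc_of_le hab]; exact hg.pow 2
  have hint2' : Integrable (fun s => g s ^ 2) μ := by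
    rwa [intervalIntegrable_iff_integrableOn_Ioc_of_le hab] at hint2
  have hmem : MemLp g (ENNReal.ofReal 2) μ := by
    rw [show ENNReal.ofReal 2 = 2 by norm_num]
    exact (memLp_two_iff_integrable_sq hmeas).2 hint2'
  have hone : MemLp (fun _ : ℝ => (1:ℝ)) (ENNReal.ofReal 2) μ := memLp_const 1
  have h := integral_mul_norm_le_Lp_mul_Lq hpq hmem hone
  simp only [norm_one, mul_one, Real.norm_eq_abs] at h
  have habs : ∀ x, |g x| = g x := fun x => abs_of_nonneg (hg0 x)
  have hrpow : ∀ x : ℝ, 0 ≤ x → x ^ (2:ℝ) = x ^ 2 := fun x hx => by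
    rw [show (2:ℝ) = ((2:ℕ):ℝ) by norm_num, Real.rpow_natCast]
  have h2 : ∀ x, |g x| ^ (2:ℝ) = g x ^ 2 := fun x => by
    rw [habs, hrpow _ (hg0 x)]
  simp only [h2] at h
  have hconst : (∫ _ : ℝ, (1:ℝ) ^ (2:ℝ) ∂μ) = b - a := by
    simp [hab, hμ, Real.one_rpow, Real.volume_Ioc, ENNReal.toReal_ofReal (by linarith : (0:ℝ) ≤ b - a)]
  rw [hconst] at h
  simp only [habs] at h
  have hI1 : (∫ s in a..b, g s) = ∫ x, g x ∂μ := by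
    rw [intervalIntegral.integral_of_le hab]
  have hI2 : (∫ s in a..b, g s ^ 2) = ∫ x, g x ^ 2 ∂μ := by
    rw [intervalIntegral.integral_of_le hab]
  rw [hI1, hI2]
  have hnn1 : 0 ≤ ∫ x, g x ∂μ := integral_nonneg fun x => hg0 x
  have hnn2 : 0 ≤ ∫ x, g x ^ 2 ∂μ := integral_nonneg fun x => sq_nonneg _
  calc (∫ x, g x ∂μ) ^ 2 ≤ ((∫ x, g x ^ 2 ∂μ) ^ (1/2:ℝ) * (b - a) ^ (1/2:ℝ)) ^ 2 := by
        apply pow_le_pow_left₀ hnn1 h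
    _ = (b - a) * ∫ x, g x ^ 2 ∂μ := by
        rw [← Real.sqrt_eq_rpow, ← Real.sqrt_eq_rpow, mul_pow,
          Real.sq_sqrt hnn2, Real.sq_sqrt (by linarith : (0:ℝ) ≤ b - a)]
        ring

/-- Accumulated bound on backward difference quotients: with `t_i = i·τ` and `f`
continuously differentiable on `[0, N·τ]`, for `1 ≤ n ≤ N`,
`∑_{i=1}^n τ·‖∂_τ f(t_i)‖² ≤ ∫_0^{t_n} ‖f′(s)‖² ds`. -/
theorem backward_difference_accumulated_bound
    {E : Type*} [NormedAddCommGroup E] [NormedSpace ℝ E] [CompleteSpace E]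
    (τ : ℝ) (hτ : 0 < τ) (N : ℕ) (hN : 0 < N) (f f' : ℝ → E)
    (hf' : ∀ t ∈ Set.Icc (0 : ℝ) (N * τ), HasDerivWithinAt f (f' t) (Set.Icc (0 : ℝ) (N * τ)) t)
    (hcont : ContinuousOn f' (Set.Icc (0 : ℝ) (N * τ))) :
    ∀ n : ℕ, 1 ≤ n → n ≤ N →
      ∑ i ∈ Finset.Icc 1 n,
          τ * ‖τ⁻¹ • (f ((i : ℝ) * τ) - f (((i : ℝ) - 1) * τ))‖ ^ 2
        ≤ ∫ s in (0 : ℝ)..((n : ℝ) * τ), ‖f' s‖ ^ 2 := by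
  intro n hn1 hnN
  have hNτ : (0:ℝ) ≤ N * τ := by positivity
  -- continuity of f on the big interval
  have hfc : ContinuousOn f (Set.Icc (0:ℝ) (N * τ)) :=
    fun t ht => (hf' t ht).continuousWithinAt
  -- per-step bound
  have step : ∀ i : ℕ, 1 ≤ i → i ≤ N →
      τ * ‖τ⁻¹ • (f ((i : ℝ) * τ) - f (((i : ℝ) - 1) * τ))‖ ^ 2
        ≤ ∫ s in (((i:ℝ) - 1) * τ)..((i:ℝ) * τ), ‖f' s‖ ^ 2 := by
    intro i hi1 hiN
    set a := ((i:ℝ) - 1) * τ with ha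
    set b := (i:ℝ) * τ with hb
    have hi1' : (1:ℝ) ≤ (i:ℝ) := by exact_mod_cast hi1
    have hiN' : (i:ℝ) ≤ (N:ℝ) := by exact_mod_cast hiN
    have hab : a ≤ b := by nlinarith
    have ha0 : 0 ≤ a := by nlinarith
    have hbN : b ≤ N * τ := by nlinarith
    have hsub : Set.Icc a b ⊆ Set.Icc (0:ℝ) (N * τ) := Set.Icc_subset_Icc ha0 hbN
    have hcont' : ContinuousOn f' (Set.Icc a b) := hcont.mono hsub
    -- FTC
    have hftc : f b - f a = ∫ s in a..b, f' s := by
      rw [intervalIntegral.integral_eq_sub_of_hasDeriv_right_of_le hab (hfc.mono hsub)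
        (fun x hx => ?_)
        (by apply ContinuousOn.intervalIntegrable; rwa [uIcc_of_le hab])]
      have hx0 : x ∈ Set.Ioo (0:ℝ) (N * τ) :=
        ⟨lt_of_le_of_lt ha0 hx.1, lt_of_lt_of_le hx.2 hbN⟩
      have hnhds : Set.Icc (0:ℝ) (N * τ) ∈ nhds x := Icc_mem_nhds hx0.1 hx0.2
      exact ((hf' x (Set.Ioo_subset_Icc_self hx0)).hasDerivAt hnhds).hasDerivWithinAt
    have hnorm : ‖f b - f a‖ ≤ ∫ s in a..b, ‖f' s‖ := by
      rw [hftc]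
      exact intervalIntegral.norm_integral_le_integral_norm hab
    have hcs : (∫ s in a..b, ‖f' s‖) ^ 2 ≤ (b - a) * ∫ s in a..b, ‖f' s‖ ^ 2 :=
      cs_aux hab (continuous_norm.comp_continuousOn hcont') (fun x => norm_nonneg _)
    have hba : b - a = τ := by ring
    rw [hba] at hcs
    have hInn : 0 ≤ ∫ s in a..b, ‖f' s‖ :=
      intervalIntegral.integral_nonneg hab (fun x _ => norm_nonneg _)
    have key : ‖f b - f a‖ ^ 2 ≤ τ * ∫ s in a..b, ‖f' s‖ ^ 2 :=
      le_trans (pow_le_pow_left₀ (norm_nonneg _) hnorm 2) hcs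
    have : τ * ‖τ⁻¹ • (f b - f a)‖ ^ 2 = τ⁻¹ * ‖f b - f a‖ ^ 2 := by
      rw [norm_smul, Real.norm_eq_abs, abs_of_pos (inv_pos.2 hτ)]
      field_simp
    rw [this]
    calc τ⁻¹ * ‖f b - f a‖ ^ 2 ≤ τ⁻¹ * (τ * ∫ s in a..b, ‖f' s‖ ^ 2) := by
          exact mul_le_mul_of_nonneg_left key (by positivity)
      _ = ∫ s in a..b, ‖f' s‖ ^ 2 := by field_simp
  -- sum up
  have hsum : ∑ i ∈ Finset.Icc 1 n,
      (∫ s in (((i:ℝ) - 1) * τ)..((i:ℝ) * τ), ‖f' s‖ ^ 2)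
      = ∫ s in (0:ℝ)..((n:ℝ) * τ), ‖f' s‖ ^ 2 := by
    have hint : ∀ k < n, IntervalIntegrable (fun s => ‖f' s‖ ^ 2) volume
        ((k:ℝ) * τ) (((k:ℕ)+1 : ℕ) * τ) := by
      intro k hk
      apply ContinuousOn.intervalIntegrable
      apply ((continuous_norm.comp_continuousOn hcont).pow 2).mono
      rw [uIcc_of_le (by push_cast; nlinarith)]
      apply Set.Icc_subset_Icc (by positivity)
      push_cast
      have : (k:ℝ) + 1 ≤ (N:ℝ) := by exact_mod_cast Nat.succ_le_of_lt (lt_of_lt_of_le hk hnN)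
      nlinarith
    have := intervalIntegral.sum_integral_adjacent_intervals
      (a := fun k : ℕ => (k:ℝ) * τ) (f := fun s => ‖f' s‖ ^ 2) (μ := volume) (n := n) ?_
    · rw [← Finset.Ico_add_one_right_eq_Icc, Finset.sum_Ico_eq_sum_range]
      rw [Nat.add_sub_cancel]
      rw [show (0:ℝ) = ((0:ℕ):ℝ) * τ by simp, ← this]
      apply Finset.sum_congr rfl
      intro j hj
      push_cast
      norm_num [add_comm]
    · intro k hk
      have := hint k hk
      push_cast at this ⊢
      convert this using 2
  rw [← hsum]
  apply Finset.sum_le_sum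
  intro i hi
  exact step i (Finset.mem_Icc.1 hi).1 (le_trans (Finset.mem_Icc.1 hi).2 hnN)
end

section
/- Let V be a real vector space with a symmetric positive semidefinite bilinear form a, and let W be a real inner product space with a symmetric positive semidefinite bilinear form d such that ‖q‖² ≤ C_W·d(q, q) for all q ∈ W, where C_W > 0. Let c₀ ≥ 0, τ > 0, let N be a positive integer, let e⁰, …, e^N ∈ V, ρ⁰, …, ρ^N ∈ W, and let r₁, …, r_N ≥ 0 be such that for every 1 ≤ n ≤ N, (1/τ)·a(eⁿ, eⁿ − e^{n−1}) + (c₀/τ)·⟨ρⁿ − ρ^{n−1}, ρⁿ⟩ + d(ρⁿ, ρⁿ) ≤ r_n·‖ρⁿ‖. Then for every 0 ≤ n ≤ N, a(eⁿ, eⁿ) + c₀·‖ρⁿ‖² ≤ a(e⁰, e⁰) + c₀·‖ρ⁰‖² + (C_W·τ/2)·∑_{i=1}^n r_i². -/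
open scoped RealInnerProductSpace

/-- Abstract fully discrete stability estimate behind the displacement–pressure
error bound (Theorem 3). -/
theorem fully_discrete_stability
    {V W : Type*} [AddCommGroup V] [Module ℝ V]
    [NormedAddCommGroup W] [InnerProductSpace ℝ W]
    (a : V →ₗ[ℝ] V →ₗ[ℝ] ℝ)
    (ha_symm : ∀ v w : V, a v w = a w v)
    (ha_pos : ∀ v : V, 0 ≤ a v v)
    (d : W →ₗ[ℝ] W →ₗ[ℝ] ℝ)
    (hd_symm : ∀ q r : W, d q r = d r q)
    (hd_pos : ∀ q : W, 0 ≤ d q q)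
    (C_W : ℝ) (hC_W : 0 < C_W)
    (hnorm : ∀ q : W, ‖q‖ ^ 2 ≤ C_W * d q q)
    (c₀ : ℝ) (hc₀ : 0 ≤ c₀) (τ : ℝ) (hτ : 0 < τ) (N : ℕ) (hN : 0 < N)
    (e : ℕ → V) (ρ : ℕ → W) (r : ℕ → ℝ)
    (hr : ∀ n : ℕ, 1 ≤ n → n ≤ N → 0 ≤ r n)
    (hstep : ∀ n : ℕ, 1 ≤ n → n ≤ N →
      (1 / τ) * a (e n) (e n - e (n - 1))
        + (c₀ / τ) * ⟪ρ n - ρ (n - 1), ρ n⟫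
        + d (ρ n) (ρ n) ≤ r n * ‖ρ n‖) :
    ∀ n : ℕ, n ≤ N →
      a (e n) (e n) + c₀ * ‖ρ n‖ ^ 2
        ≤ a (e 0) (e 0) + c₀ * ‖ρ 0‖ ^ 2
          + (C_W * τ / 2) * ∑ i ∈ Finset.Icc 1 n, r i ^ 2 := by
  intro n
  induction n with
  | zero => intro _; simp
  | succ n ih =>
    intro hnN
    have hn : n ≤ N := Nat.le_of_succ_le hnN
    have ih' := ih hn
    -- step inequality at n+1
    have hs := hstep (n + 1) (Nat.le_add_left 1 n) hnN
    simp only [Nat.add_sub_cancel] at hs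
    set x := e (n + 1)
    set y := e n
    set p := ρ (n + 1)
    set q := ρ n
    have hA : a x x - a y y ≤ 2 * a x (x - y) := by
      have hpos := ha_pos (x - y)
      have hexp : a (x - y) (x - y) = a x x - 2 * a x y + a y y := by
        simp [map_sub, LinearMap.sub_apply, ha_symm x y]; ring
      have hexp2 : a x (x - y) = a x x - a x y := by simp [map_sub]
      nlinarith [hpos]
    have hB : ‖p‖ ^ 2 - ‖q‖ ^ 2 ≤ 2 * ⟪p - q, p⟫ := by
      have h1 : ⟪p - q, p⟫ = ‖p‖ ^ 2 - ⟪q, p⟫ := by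
        rw [inner_sub_left, real_inner_self_eq_norm_sq]
      have h2 : (0:ℝ) ≤ ‖q - p‖ ^ 2 := sq_nonneg _
      have h3 : ‖q - p‖ ^ 2 = ‖q‖ ^ 2 - 2 * ⟪q, p⟫ + ‖p‖ ^ 2 := by
        rw [norm_sub_sq_real]
      nlinarith
    have hD : r (n + 1) * ‖p‖ - d p p ≤ C_W * r (n + 1) ^ 2 / 4 := by
      have h1 := hnorm p
      have h2 : (0:ℝ) ≤ (‖p‖ - C_W * r (n + 1) / 2) ^ 2 := sq_nonneg _
      nlinarith
    -- multiply the step inequality by τ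
    have hs2 : a x (x - y) + c₀ * ⟪p - q, p⟫ + τ * d p p ≤ τ * (r (n + 1) * ‖p‖) := by
      have := mul_le_mul_of_nonneg_left hs hτ.le
      have hτ' : τ ≠ 0 := ne_of_gt hτ
      calc a x (x - y) + c₀ * ⟪p - q, p⟫ + τ * d p p
          = τ * ((1 / τ) * a x (x - y) + (c₀ / τ) * ⟪p - q, p⟫ + d p p) := by
            field_simp
        _ ≤ τ * (r (n + 1) * ‖p‖) := this
    have hstepbound : a x x + c₀ * ‖p‖ ^ 2
        ≤ a y y + c₀ * ‖q‖ ^ 2 + (C_W * τ / 2) * r (n + 1) ^ 2 := by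
      nlinarith [mul_le_mul_of_nonneg_left hB hc₀, mul_le_mul_of_nonneg_left hD (by positivity : (0:ℝ) ≤ 2 * τ)]
    have hsum : ∑ i ∈ Finset.Icc 1 (n + 1), r i ^ 2
        = (∑ i ∈ Finset.Icc 1 n, r i ^ 2) + r (n + 1) ^ 2 :=
      Finset.sum_Icc_succ_top (Nat.le_add_left 1 n) _
    rw [hsum]
    linarith
end

section
/- Let V be a real normed space with a continuous symmetric positive semidefinite bilinear form a, and let W be a real inner product space with a continuous symmetric positive semidefinite bilinear form d such that ‖q‖² ≤ C_W·d(q, q) for all q ∈ W, where C_W > 0. Let c₀ ≥ 0, T > 0, let e : [0, T] → V and ρ : [0, T] → W be differentiable, and let r : [0, T] → ℝ be continuous and nonnegative, such that for every t ∈ [0, T], a(e(t), e′(t)) + c₀·⟨ρ′(t), ρ(t)⟩ + d(ρ(t), ρ(t)) ≤ r(t)·‖ρ(t)‖. Then for every t ∈ [0, T], a(e(t), e(t)) + c₀·‖ρ(t)‖² ≤ a(e(0), e(0)) + c₀·‖ρ(0)‖² + (C_W/2)·∫_0^t r(s)² ds. -/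
open scoped RealInnerProductSpace

/-- Abstract differential-inequality estimate behind the semidiscrete
displacement–pressure error bound (Theorem 1). -/
theorem semidiscrete_stability
    {V W : Type*} [NormedAddCommGroup V] [NormedSpace ℝ V]
    [NormedAddCommGroup W] [InnerProductSpace ℝ W]
    (a : V →L[ℝ] V →L[ℝ] ℝ)
    (ha_symm : ∀ v w : V, a v w = a w v)
    (ha_pos : ∀ v : V, 0 ≤ a v v)
    (d : W →L[ℝ] W →L[ℝ] ℝ)
    (hd_symm : ∀ q r : W, d q r = d r q)
    (hd_pos : ∀ q : W, 0 ≤ d q q)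
    (C_W : ℝ) (hC_W : 0 < C_W)
    (hnorm : ∀ q : W, ‖q‖ ^ 2 ≤ C_W * d q q)
    (c₀ : ℝ) (hc₀ : 0 ≤ c₀) (T : ℝ) (hT : 0 < T)
    (e e' : ℝ → V) (ρ ρ' : ℝ → W) (r : ℝ → ℝ)
    (he : ∀ t ∈ Set.Icc (0 : ℝ) T, HasDerivWithinAt e (e' t) (Set.Icc (0 : ℝ) T) t)
    (hρ : ∀ t ∈ Set.Icc (0 : ℝ) T, HasDerivWithinAt ρ (ρ' t) (Set.Icc (0 : ℝ) T) t)
    (hr_cont : ContinuousOn r (Set.Icc (0 : ℝ) T))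
    (hr_nonneg : ∀ t ∈ Set.Icc (0 : ℝ) T, 0 ≤ r t)
    (hineq : ∀ t ∈ Set.Icc (0 : ℝ) T,
      a (e t) (e' t) + c₀ * ⟪ρ' t, ρ t⟫ + d (ρ t) (ρ t) ≤ r t * ‖ρ t‖) :
    ∀ t ∈ Set.Icc (0 : ℝ) T,
      a (e t) (e t) + c₀ * ‖ρ t‖ ^ 2
        ≤ a (e 0) (e 0) + c₀ * ‖ρ 0‖ ^ 2
          + (C_W / 2) * ∫ s in (0 : ℝ)..t, r s ^ 2 := by
  intro t ht
  set s : Set ℝ := Set.Icc (0 : ℝ) T with hs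
  have hr2 : ContinuousOn (fun u => r u ^ 2) s := hr_cont.pow 2
  set F : ℝ → ℝ := fun u =>
    a (e u) (e u) + c₀ * ⟪ρ u, ρ u⟫ - (C_W / 2) * ∫ x in (0 : ℝ)..u, r x ^ 2 with hF
  have hFd : ∀ u ∈ s, HasDerivWithinAt F
      (2 * a (e u) (e' u) + c₀ * (2 * ⟪ρ' u, ρ u⟫) - (C_W / 2) * r u ^ 2) s u := by
    intro u hu
    have h1 : HasDerivWithinAt (fun u => a (e u) (e u))
        (a (e' u) (e u) + a (e u) (e' u)) s u := by
      have hc : HasDerivWithinAt (fun u => a (e u)) (a (e' u)) s u :=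
        (a.hasFDerivAt (x := e u)).comp_hasDerivWithinAt u (he u hu)
      exact hc.clm_apply (he u hu)
    have h1' : HasDerivWithinAt (fun u => a (e u) (e u))
        (2 * a (e u) (e' u)) s u := by
      convert h1 using 1
      rw [ha_symm (e' u) (e u)]; ring
    have h2 : HasDerivWithinAt (fun u => ⟪ρ u, ρ u⟫)
        (2 * ⟪ρ' u, ρ u⟫) s u := by
      have := (hρ u hu).inner ℝ (hρ u hu)
      exact this.congr_deriv (by rw [real_inner_comm (ρ u) (ρ' u)]; ring)
    have hint : IntervalIntegrable (fun x => r x ^ 2) MeasureTheory.volume 0 u := by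
      apply ContinuousOn.intervalIntegrable
      apply hr2.mono
      rw [Set.uIcc_of_le hu.1]
      exact Set.Icc_subset_Icc le_rfl hu.2
    haveI : Fact (u ∈ Set.Icc (0 : ℝ) T) := ⟨hu⟩
    have h3 : HasDerivWithinAt (fun u => ∫ x in (0 : ℝ)..u, r x ^ 2) (r u ^ 2) s u :=
      intervalIntegral.integral_hasDerivWithinAt_right hint
        (hr2.stronglyMeasurableAtFilter_nhdsWithin measurableSet_Icc u)
        (hr2 u hu)
    exact (h1'.add ((h2.const_mul c₀))).sub ((h3.const_mul (C_W / 2)))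
  have hanti : AntitoneOn F s := by
    apply antitoneOn_of_deriv_nonpos (convex_Icc 0 T)
    · intro u hu
      exact ((hFd u hu).continuousWithinAt)
    · intro u hu
      rw [interior_Icc] at hu
      exact ((hFd u (Set.mem_Icc_of_Ioo hu)).hasDerivAt
        (Icc_mem_nhds hu.1 hu.2)).differentiableAt.differentiableWithinAt
    · intro u hu
      rw [interior_Icc] at hu
      have hu' : u ∈ s := Set.mem_Icc_of_Ioo hu
      have hd' := ((hFd u hu').hasDerivAt (Icc_mem_nhds hu.1 hu.2)).deriv
      rw [hd']
      have key := hineq u hu'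
      have h1 := hnorm (ρ u)
      have h2 := hr_nonneg u hu'
      have h3 : 0 ≤ ‖ρ u‖ := norm_nonneg _
      nlinarith [sq_nonneg (C_W * r u - 2 * ‖ρ u‖), hd_pos (ρ u)]
  have h0 : (0 : ℝ) ∈ s := Set.left_mem_Icc.mpr hT.le
  have := hanti h0 ht ht.1
  simp only [hF, intervalIntegral.integral_same] at this
  rw [← real_inner_self_eq_norm_sq, ← real_inner_self_eq_norm_sq]
  linarith
end

section
/- Let W be a real inner product space with a continuous symmetric positive semidefinite bilinear form d, let c₀ > 0 and T > 0, let ρ : [0, T] → W be differentiable, and let r : [0, T] → ℝ be continuous and nonnegative, such that for every t ∈ [0, T], c₀·‖ρ′(t)‖² + d(ρ(t), ρ′(t)) ≤ r(t)·‖ρ′(t)‖. Then for every t ∈ [0, T], d(ρ(t), ρ(t)) ≤ d(ρ(0), ρ(0)) + (1/(2·c₀))·∫_0^t r(s)² ds. -/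
open scoped RealInnerProductSpace

/-- Abstract differential-inequality estimate behind the semidiscrete H¹-type
pressure error bound (Theorem 2). -/
theorem semidiscrete_pressure_stability
    {W : Type*} [NormedAddCommGroup W] [InnerProductSpace ℝ W]
    (d : W →L[ℝ] W →L[ℝ] ℝ)
    (hd_symm : ∀ q r : W, d q r = d r q)
    (hd_pos : ∀ q : W, 0 ≤ d q q)
    (c₀ : ℝ) (hc₀ : 0 < c₀) (T : ℝ) (hT : 0 < T)
    (ρ ρ' : ℝ → W) (r : ℝ → ℝ)
    (hρ : ∀ t ∈ Set.Icc (0 : ℝ) T, HasDerivWithinAt ρ (ρ' t) (Set.Icc (0 : ℝ) T) t)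
    (hr_cont : ContinuousOn r (Set.Icc (0 : ℝ) T))
    (hr_nonneg : ∀ t ∈ Set.Icc (0 : ℝ) T, 0 ≤ r t)
    (hineq : ∀ t ∈ Set.Icc (0 : ℝ) T,
      c₀ * ‖ρ' t‖ ^ 2 + d (ρ t) (ρ' t) ≤ r t * ‖ρ' t‖) :
    ∀ t ∈ Set.Icc (0 : ℝ) T,
      d (ρ t) (ρ t) ≤ d (ρ 0) (ρ 0) + (1 / (2 * c₀)) * ∫ s in (0 : ℝ)..t, r s ^ 2 := by
  have hIcc : Set.uIcc (0:ℝ) T = Set.Icc 0 T := Set.uIcc_of_le hT.le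
  have hr2_cont : ContinuousOn (fun s => r s ^ 2) (Set.Icc (0:ℝ) T) := by
    exact (hr_cont.pow 2)
  -- continuity of ρ on Icc
  have hρ_cont : ContinuousOn ρ (Set.Icc (0:ℝ) T) :=
    fun t ht => (hρ t ht).continuousWithinAt
  -- g := d(ρ t)(ρ t)
  set g : ℝ → ℝ := fun t => d (ρ t) (ρ t) with hg_def
  have hg_deriv : ∀ t ∈ Set.Icc (0:ℝ) T,
      HasDerivWithinAt g (2 * d (ρ t) (ρ' t)) (Set.Icc (0:ℝ) T) t := by
    intro t ht
    have h1 : HasDerivWithinAt (fun s => d (ρ s)) (d (ρ' t)) (Set.Icc (0:ℝ) T) t :=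
      d.hasFDerivAt.comp_hasDerivWithinAt t (hρ t ht)
    have h2 := h1.clm_apply (hρ t ht)
    have : d (ρ' t) (ρ t) + d (ρ t) (ρ' t) = 2 * d (ρ t) (ρ' t) := by
      rw [hd_symm (ρ' t) (ρ t)]; ring
    simpa [this] using h2
  -- primitive
  set P : ℝ → ℝ := fun t => ∫ s in (0:ℝ)..t, r s ^ 2 with hP_def
  have hr2_int : ∀ t ∈ Set.Icc (0:ℝ) T,
      IntervalIntegrable (fun s => r s ^ 2) MeasureTheory.volume 0 t := by
    intro t ht
    apply ContinuousOn.intervalIntegrable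
    apply hr2_cont.mono
    rw [Set.uIcc_of_le ht.1]
    exact Set.Icc_subset_Icc le_rfl ht.2
  have hP_cont : ContinuousOn P (Set.Icc (0:ℝ) T) := by
    have := intervalIntegral.continuousOn_primitive_interval
      (μ := MeasureTheory.volume) (f := fun s => r s ^ 2) (a := (0:ℝ)) (b := T)
      ((hr2_cont.mono (by rw [hIcc])).integrableOn_compact (by rw [hIcc]; exact isCompact_Icc))
    rwa [hIcc] at this
  have hP_deriv : ∀ t ∈ Set.Icc (0:ℝ) T,
      HasDerivWithinAt P (r t ^ 2) (Set.Icc (0:ℝ) T) t := by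
    intro t ht
    have hmeas : StronglyMeasurableAtFilter (fun s => r s ^ 2)
        (nhdsWithin t (Set.Icc (0:ℝ) T)) MeasureTheory.volume :=
      hr2_cont.stronglyMeasurableAtFilter_nhdsWithin measurableSet_Icc t
    haveI : Fact (t ∈ Set.Icc (0:ℝ) T) := ⟨ht⟩
    haveI : intervalIntegral.FTCFilter t (nhdsWithin t (Set.Icc (0:ℝ) T))
        (nhdsWithin t (Set.Icc (0:ℝ) T)) := intervalIntegral.FTCFilter.nhdsIcc
    exact intervalIntegral.integral_hasDerivWithinAt_right (hr2_int t ht) hmeas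
      (hr2_cont t ht)
  -- F := g 0 + (1/(2c₀)) P - g is monotone on Icc
  set F : ℝ → ℝ := fun t => g 0 + (1 / (2 * c₀)) * P t - g t with hF_def
  have hF_cont : ContinuousOn F (Set.Icc (0:ℝ) T) := by
    apply ContinuousOn.sub
    · exact continuousOn_const.add (continuousOn_const.mul hP_cont)
    · exact (d.continuous₂.comp_continuousOn (hρ_cont.prodMk hρ_cont))
  have hF_mono : MonotoneOn F (Set.Icc (0:ℝ) T) := by
    apply monotoneOn_of_hasDerivWithinAt_nonneg (convex_Icc 0 T) hF_cont
      (f' := fun t => (1 / (2 * c₀)) * r t ^ 2 - 2 * d (ρ t) (ρ' t))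
    · intro x hx
      have hx' : x ∈ Set.Icc (0:ℝ) T := interior_subset hx
      exact (((hP_deriv x hx').const_mul _).const_add _ |>.sub (hg_deriv x hx')).mono
        interior_subset
    · intro x hx
      have hx' : x ∈ Set.Icc (0:ℝ) T := interior_subset hx
      have h := hineq x hx'
      have hn : (0:ℝ) ≤ ‖ρ' x‖ := norm_nonneg _
      have key : 2 * d (ρ x) (ρ' x) ≤ r x ^ 2 / (2 * c₀) := by
        rw [le_div_iff₀ (by positivity)]
        nlinarith [sq_nonneg (2 * c₀ * ‖ρ' x‖ - r x)]
      have : (1 / (2 * c₀)) * r x ^ 2 = r x ^ 2 / (2 * c₀) := by ring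
      linarith
  intro t ht
  have h0 : (0:ℝ) ∈ Set.Icc (0:ℝ) T := ⟨le_rfl, hT.le⟩
  have := hF_mono h0 ht ht.1
  have hF0 : F 0 = 0 := by simp [hF_def, hP_def]
  rw [hF0] at this
  simp only [hF_def, hP_def, hg_def] at this ⊢
  linarith
end

section
/- Let W be a real inner product space with a symmetric positive semidefinite bilinear form d, let c₀ > 0 and τ > 0, let N be a positive integer, let ρ⁰, …, ρ^N ∈ W, and let r₁, …, r_N ≥ 0 be such that for every 1 ≤ n ≤ N, writing δⁿ := (ρⁿ − ρ^{n−1})/τ, c₀·‖δⁿ‖² + d(ρⁿ, δⁿ) ≤ r_n·‖δⁿ‖. Then for every 0 ≤ n ≤ N, d(ρⁿ, ρⁿ) ≤ d(ρ⁰, ρ⁰) + (τ/(2·c₀))·∑_{i=1}^n r_i². -/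
/-! Writing `δ = τ⁻¹ • (a - b)`, symmetry and positive semidefiniteness of `d` give
`d(a, a) - d(b, b) ≤ 2 d(a, a - b) = 2τ d(a, δ)`, and Young's inequality
`r ‖δ‖ ≤ c₀ ‖δ‖² + r² / (4 c₀)` turns the step hypothesis into `d(a, δ) ≤ r² / (4 c₀)`.
So each step raises `d(ρⁿ, ρⁿ)` by at most `τ r_n² / (2 c₀)`, and these increments telescope. -/

open Finset

lemma mul_le_mul_sq_add_sq_div_four_mul {c : ℝ} (hc : 0 < c) (r x : ℝ) :
    r * x ≤ c * x ^ 2 + r ^ 2 / (4 * c) := by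
  have hsq : r ^ 2 / (4 * c) * (4 * c) = r ^ 2 := div_mul_cancel₀ _ (by positivity)
  nlinarith [sq_nonneg (r - 2 * c * x)]

lemma le_add_sum_Icc_of_le_add {f g : ℕ → ℝ} {N : ℕ}
    (h : ∀ n, 1 ≤ n → n ≤ N → f n ≤ f (n - 1) + g n) :
    ∀ n ≤ N, f n ≤ f 0 + ∑ i ∈ Icc 1 n, g i := by
  intro n
  induction n with
  | zero => simp
  | succ m ih =>
    intro hm
    have hstep := h (m + 1) (by omega) hm
    rw [Nat.add_sub_cancel] at hstep
    rw [sum_Icc_succ_top (by omega)]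
    linarith [ih (by omega)]

section SymmetricPositiveSemidefinite

variable {W : Type*} [AddCommGroup W] [Module ℝ W] {d : W →ₗ[ℝ] W →ₗ[ℝ] ℝ}

lemma apply_self_sub_apply_self_le_two_mul (hd_symm : ∀ q r : W, d q r = d r q)
    (hd_pos : ∀ q : W, 0 ≤ d q q) (a b : W) :
    d a a - d b b ≤ 2 * d a (a - b) := by
  have hexpand : d (a - b) (a - b) = 2 * d a (a - b) - d a a + d b b := by
    simp only [map_sub, LinearMap.sub_apply]
    linarith [hd_symm a b]
  linarith [hd_pos (a - b)]

lemma apply_self_le_of_step_bound (hd_symm : ∀ q r : W, d q r = d r q)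
    (hd_pos : ∀ q : W, 0 ≤ d q q) [Norm W] {c τ r : ℝ} (hc : 0 < c) (hτ : 0 < τ) {a b : W}
    (hstep : c * ‖τ⁻¹ • (a - b)‖ ^ 2 + d a (τ⁻¹ • (a - b)) ≤ r * ‖τ⁻¹ • (a - b)‖) :
    d a a ≤ d b b + τ / (2 * c) * r ^ 2 := by
  set δ := τ⁻¹ • (a - b)
  have hδ : d a δ ≤ r ^ 2 / (4 * c) := by
    linarith [mul_le_mul_sq_add_sq_div_four_mul hc r ‖δ‖]
  have hsub : a - b = τ • δ := by rw [smul_inv_smul₀ hτ.ne']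
  have hincr : d a (a - b) = τ * d a δ := by rw [hsub, map_smul, smul_eq_mul]
  have hconst : τ / (2 * c) * r ^ 2 = 2 * (τ * (r ^ 2 / (4 * c))) := by
    field_simp
    ring
  nlinarith [apply_self_sub_apply_self_le_two_mul hd_symm hd_pos a b]

end SymmetricPositiveSemidefinite

theorem fully_discrete_pressure_stability_general
    {W : Type*} [NormedAddCommGroup W] [InnerProductSpace ℝ W]
    (d : W →ₗ[ℝ] W →ₗ[ℝ] ℝ)
    (hd_symm : ∀ q r : W, d q r = d r q)
    (hd_pos : ∀ q : W, 0 ≤ d q q)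
    (c₀ : ℝ) (hc₀ : 0 < c₀) (τ : ℝ) (hτ : 0 < τ) (N : ℕ)
    (ρ : ℕ → W) (r : ℕ → ℝ)
    (hstep : ∀ n : ℕ, 1 ≤ n → n ≤ N →
      c₀ * ‖τ⁻¹ • (ρ n - ρ (n - 1))‖ ^ 2 + d (ρ n) (τ⁻¹ • (ρ n - ρ (n - 1)))
        ≤ r n * ‖τ⁻¹ • (ρ n - ρ (n - 1))‖) :
    ∀ n : ℕ, n ≤ N →
      d (ρ n) (ρ n) ≤ d (ρ 0) (ρ 0) + (τ / (2 * c₀)) * ∑ i ∈ Finset.Icc 1 n, r i ^ 2 := by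
  intro n hn
  rw [mul_sum]
  exact le_add_sum_Icc_of_le_add (fun m hm hmN =>
    apply_self_le_of_step_bound hd_symm hd_pos hc₀ hτ (hstep m hm hmN)) n hn

/-- Abstract telescoping estimate behind the fully discrete H¹-type pressure
error bound (Theorem 4). -/
theorem fully_discrete_pressure_stability
    {W : Type*} [NormedAddCommGroup W] [InnerProductSpace ℝ W]
    (d : W →ₗ[ℝ] W →ₗ[ℝ] ℝ)
    (hd_symm : ∀ q r : W, d q r = d r q)
    (hd_pos : ∀ q : W, 0 ≤ d q q)
    (c₀ : ℝ) (hc₀ : 0 < c₀) (τ : ℝ) (hτ : 0 < τ) (N : ℕ) (hN : 0 < N)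
    (ρ : ℕ → W) (r : ℕ → ℝ)
    (hr : ∀ n : ℕ, 1 ≤ n → n ≤ N → 0 ≤ r n)
    (hstep : ∀ n : ℕ, 1 ≤ n → n ≤ N →
      c₀ * ‖τ⁻¹ • (ρ n - ρ (n - 1))‖ ^ 2 + d (ρ n) (τ⁻¹ • (ρ n - ρ (n - 1)))
        ≤ r n * ‖τ⁻¹ • (ρ n - ρ (n - 1))‖) :
    ∀ n : ℕ, n ≤ N →
      d (ρ n) (ρ n) ≤ d (ρ 0) (ρ 0) + (τ / (2 * c₀)) * ∑ i ∈ Finset.Icc 1 n, r i ^ 2 :=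
  fully_discrete_pressure_stability_general d hd_symm hd_pos c₀ hc₀ τ hτ N ρ r hstep
end

section
/- Let V and W be finite-dimensional real inner product spaces. Let a : V × V → ℝ be a bilinear form which is coercive, i.e. there is α > 0 with a(v, v) ≥ α·‖v‖² for all v ∈ V; let d : W × W → ℝ be a positive semidefinite bilinear form; let b : V × W → ℝ be bilinear; and let c₀ > 0, τ > 0. Then for every pair of linear functionals F : V → ℝ and G : W → ℝ there exists a unique pair (u, p) ∈ V × W such that a(u, v) − b(v, p) = F(v) for all v ∈ V, and c₀·⟨p, q⟩ + b(u, q) + τ·d(p, q) = G(q) for all q ∈ W. -/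
open scoped RealInnerProductSpace

/-! One backward-Euler step is a single variational problem on `V × W` for the form
`B((u, p), (v, q)) = a(u, v) - b(v, p) + c₀⟪p, q⟫ + b(u, q) + τ d(p, q)`.
On the diagonal the two coupling terms cancel, leaving `a(u, u) + c₀‖p‖² + τ d(p, p)`,
which vanishes only at `(0, 0)`. So `B`, viewed as a map into the dual, is injective,
and hence bijective in finite dimension. -/

theorem LinearMap.BilinForm.bijective_of_anisotropic {K E : Type*} [Field K]
    [AddCommGroup E] [Module K E] [FiniteDimensional K E] {B : LinearMap.BilinForm K E}
    (hB : B.toQuadraticMap.Anisotropic) : Function.Bijective B := by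
  have hinj : Function.Injective B :=
    LinearMap.ker_eq_bot.mp <| LinearMap.separatingLeft_iff_ker_eq_bot.mp <|
      separatingLeft_of_anisotropic hB
  exact ⟨hinj, (LinearMap.injective_iff_surjective_of_finrank_eq_finrank
    Subspace.dual_finrank_eq.symm).mp hinj⟩

section BiotStep

variable {V W : Type*} [NormedAddCommGroup V] [InnerProductSpace ℝ V]
  [NormedAddCommGroup W] [InnerProductSpace ℝ W]
  (a : V →ₗ[ℝ] V →ₗ[ℝ] ℝ) (d : W →ₗ[ℝ] W →ₗ[ℝ] ℝ) (b : V →ₗ[ℝ] W →ₗ[ℝ] ℝ) (c₀ τ : ℝ)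

noncomputable def biotStepForm : LinearMap.BilinForm ℝ (V × W) :=
  a.compl₁₂ (LinearMap.fst ℝ V W) (LinearMap.fst ℝ V W)
    - b.flip.compl₁₂ (LinearMap.snd ℝ V W) (LinearMap.fst ℝ V W)
    + c₀ • (innerₗ W).compl₁₂ (LinearMap.snd ℝ V W) (LinearMap.snd ℝ V W)
    + b.compl₁₂ (LinearMap.fst ℝ V W) (LinearMap.snd ℝ V W)
    + τ • d.compl₁₂ (LinearMap.snd ℝ V W) (LinearMap.snd ℝ V W)

@[simp]
theorem biotStepForm_apply (x y : V × W) :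
    biotStepForm a d b c₀ τ x y =
      a x.1 y.1 - b y.1 x.2 + c₀ * ⟪x.2, y.2⟫ + b x.1 y.2 + τ * d x.2 y.2 := by
  simp [biotStepForm]

theorem biotStepForm_apply_self (x : V × W) :
    biotStepForm a d b c₀ τ x x = a x.1 x.1 + c₀ * ‖x.2‖ ^ 2 + τ * d x.2 x.2 := by
  rw [biotStepForm_apply, real_inner_self_eq_norm_sq]
  ring

theorem biotStepForm_anisotropic {α : ℝ} (hα : 0 < α) (ha : ∀ v, α * ‖v‖ ^ 2 ≤ a v v)
    (hd : ∀ q, 0 ≤ d q q) (hc₀ : 0 < c₀) (hτ : 0 < τ) :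
    (biotStepForm a d b c₀ τ).toQuadraticMap.Anisotropic := by
  intro x hx
  rw [LinearMap.BilinMap.toQuadraticMap_apply, biotStepForm_apply_self] at hx
  have hu_nonneg : 0 ≤ α * ‖x.1‖ ^ 2 := by positivity
  have hp_nonneg : 0 ≤ c₀ * ‖x.2‖ ^ 2 := by positivity
  have hd_nonneg : 0 ≤ τ * d x.2 x.2 := mul_nonneg hτ.le (hd x.2)
  have hu : α * ‖x.1‖ ^ 2 = 0 := by linarith [ha x.1]
  have hp : c₀ * ‖x.2‖ ^ 2 = 0 := by linarith [ha x.1]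
  exact Prod.ext (by simpa [hα.ne'] using hu) (by simpa [hc₀.ne'] using hp)

theorem biotStepForm_eq_coprod_iff (F : V →ₗ[ℝ] ℝ) (G : W →ₗ[ℝ] ℝ) (x : V × W) :
    biotStepForm a d b c₀ τ x = F.coprod G ↔
      (∀ v, a x.1 v - b v x.2 = F v) ∧
        ∀ q, c₀ * ⟪x.2, q⟫ + b x.1 q + τ * d x.2 q = G q := by
  constructor
  · intro h
    refine ⟨fun v => ?_, fun q => ?_⟩
    · simpa using LinearMap.congr_fun h (v, 0)
    · simpa using LinearMap.congr_fun h (0, q)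
  · rintro ⟨hF, hG⟩
    refine LinearMap.ext fun ⟨v, q⟩ => ?_
    simp only [biotStepForm_apply, LinearMap.coprod_apply, ← hF v, ← hG q]
    ring

end BiotStep

/-- Unique solvability of one backward-Euler step of the weak Galerkin scheme
(equations (21)–(22)), abstract version with `c₀ > 0`. -/
theorem backward_euler_step_unique_solvability
    {V W : Type*} [NormedAddCommGroup V] [InnerProductSpace ℝ V]
    [NormedAddCommGroup W] [InnerProductSpace ℝ W]
    [FiniteDimensional ℝ V] [FiniteDimensional ℝ W]
    (a : V →ₗ[ℝ] V →ₗ[ℝ] ℝ)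
    (α : ℝ) (hα : 0 < α) (ha_coercive : ∀ v : V, α * ‖v‖ ^ 2 ≤ a v v)
    (d : W →ₗ[ℝ] W →ₗ[ℝ] ℝ) (hd_pos : ∀ q : W, 0 ≤ d q q)
    (b : V →ₗ[ℝ] W →ₗ[ℝ] ℝ)
    (c₀ : ℝ) (hc₀ : 0 < c₀) (τ : ℝ) (hτ : 0 < τ) :
    ∀ (F : V →ₗ[ℝ] ℝ) (G : W →ₗ[ℝ] ℝ),
      ∃! up : V × W,
        (∀ v : V, a up.1 v - b v up.2 = F v) ∧
        (∀ q : W, c₀ * ⟪up.2, q⟫ + b up.1 q + τ * d up.2 q = G q) := by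
  intro F G
  have hB := LinearMap.BilinForm.bijective_of_anisotropic
    (biotStepForm_anisotropic a d b c₀ τ hα ha_coercive hd_pos hc₀ hτ)
  simpa only [biotStepForm_eq_coprod_iff] using hB.existsUnique (F.coprod G)
end

section
/- Let V and W be finite-dimensional real inner product spaces. Let a : V × V → ℝ be a bilinear form which is coercive, i.e. there is α > 0 with a(v, v) ≥ α·‖v‖² for all v ∈ V; let d : W × W → ℝ be a positive semidefinite bilinear form; let b : V × W → ℝ be a bilinear form satisfying the inf-sup condition: there is β > 0 such that for every q ∈ W there exists v ∈ V with v ≠ 0 and b(v, q) ≥ β·‖v‖·‖q‖; and let c₀ ≥ 0, τ > 0. Then for every pair of linear functionals F : V → ℝ and G : W → ℝ there exists a unique pair (u, p) ∈ V × W such that a(u, v) − b(v, p) = F(v) for all v ∈ V, and c₀·⟨p, q⟩ + b(u, q) + τ·d(p, q) = G(q) for all q ∈ W. -/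
/-!
The step is a square linear system on `V × W`, so by finite dimensionality it suffices to show
that the homogeneous system has only the trivial solution. Testing it with `(u, p)` itself makes
the coupling terms `± b(u, p)` cancel, leaving `a(u, u) + c₀‖p‖² + τ d(p, p) = 0`; coercivity gives
`u = 0`, after which the first equation reads `b(v, p) = 0` for all `v`, and the inf-sup condition
forces `p = 0`.
-/

open scoped RealInnerProductSpace

section SaddlePoint

variable {𝕜 V W : Type*} [Field 𝕜] [AddCommGroup V] [Module 𝕜 V] [AddCommGroup W] [Module 𝕜 W]

def saddlePointOperator (a : V →ₗ[𝕜] V →ₗ[𝕜] 𝕜) (b : V →ₗ[𝕜] W →ₗ[𝕜] 𝕜)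
    (c : W →ₗ[𝕜] W →ₗ[𝕜] 𝕜) : V × W →ₗ[𝕜] Module.Dual 𝕜 V × Module.Dual 𝕜 W :=
  (a.coprod (-b.flip)).prod (b.coprod c)

variable (a : V →ₗ[𝕜] V →ₗ[𝕜] 𝕜) (b : V →ₗ[𝕜] W →ₗ[𝕜] 𝕜) (c : W →ₗ[𝕜] W →ₗ[𝕜] 𝕜)

@[simp]
theorem saddlePointOperator_apply (x : V × W) :
    saddlePointOperator a b c x = (a x.1 - b.flip x.2, b x.1 + c x.2) := by
  simp [saddlePointOperator, sub_eq_add_neg]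

variable {a b c} [LinearOrder 𝕜] [IsStrictOrderedRing 𝕜]

theorem saddlePointOperator_injective (ha : ∀ u ≠ 0, 0 < a u u) (hc : ∀ p, 0 ≤ c p p)
    (hb : Function.Injective b.flip) : Function.Injective (saddlePointOperator a b c) := by
  rw [← LinearMap.ker_eq_bot, LinearMap.ker_eq_bot']
  rintro ⟨u, p⟩ hx
  simp only [saddlePointOperator_apply, Prod.mk_eq_zero] at hx
  obtain ⟨hfirst, hsecond⟩ := hx
  have hu : u = 0 := by
    by_contra hu
    have energy : a u u + c p p = 0 := by
      have h₁ := LinearMap.congr_fun hfirst u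
      have h₂ := LinearMap.congr_fun hsecond p
      simp only [LinearMap.sub_apply, LinearMap.add_apply, LinearMap.flip_apply,
        LinearMap.zero_apply] at h₁ h₂
      linear_combination h₁ + h₂
    linarith [ha u hu, hc p]
  subst hu
  have hp : b.flip p = 0 := by simpa using hfirst
  exact Prod.ext rfl (hb (hp.trans (map_zero _).symm))

theorem saddlePointOperator_bijective [FiniteDimensional 𝕜 V] [FiniteDimensional 𝕜 W]
    (ha : ∀ u ≠ 0, 0 < a u u) (hc : ∀ p, 0 ≤ c p p) (hb : Function.Injective b.flip) :
    Function.Bijective (saddlePointOperator a b c) := by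
  have hinj := saddlePointOperator_injective ha hc hb
  have hdim : Module.finrank 𝕜 (V × W) =
      Module.finrank 𝕜 (Module.Dual 𝕜 V × Module.Dual 𝕜 W) := by
    simp only [Module.finrank_prod, Subspace.dual_finrank_eq]
  exact ⟨hinj, (LinearMap.injective_iff_surjective_of_finrank_eq_finrank hdim).mp hinj⟩

end SaddlePoint

theorem pos_of_coercive {V : Type*} [NormedAddCommGroup V] [Module ℝ V]
    {a : V →ₗ[ℝ] V →ₗ[ℝ] ℝ} {α : ℝ} (hα : 0 < α) (ha : ∀ v, α * ‖v‖ ^ 2 ≤ a v v) :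
    ∀ v ≠ 0, 0 < a v v := fun v hv ↦
  (mul_pos hα (pow_pos (norm_pos_iff.mpr hv) 2)).trans_le (ha v)

theorem flip_injective_of_infsup {V W : Type*} [NormedAddCommGroup V] [Module ℝ V]
    [NormedAddCommGroup W] [Module ℝ W] {b : V →ₗ[ℝ] W →ₗ[ℝ] ℝ} {β : ℝ} (hβ : 0 < β)
    (hinfsup : ∀ q : W, ∃ v : V, v ≠ 0 ∧ β * ‖v‖ * ‖q‖ ≤ b v q) :
    Function.Injective b.flip := by
  rw [← LinearMap.ker_eq_bot, LinearMap.ker_eq_bot']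
  intro q hq
  obtain ⟨v, hv, hbound⟩ := hinfsup q
  have hbvq : b v q = 0 := LinearMap.congr_fun hq v
  have hβv : 0 < β * ‖v‖ := mul_pos hβ (norm_pos_iff.mpr hv)
  have hq : ‖q‖ ≤ 0 := nonpos_of_mul_nonpos_right (hbvq ▸ hbound) hβv
  exact norm_le_zero_iff.mp hq

/-- Unique solvability of one backward-Euler step of the weak Galerkin scheme
(equations (21)–(22)) in the possibly degenerate case `c₀ ≥ 0`, relying on the
discrete inf-sup condition for the coupling form `b`. -/
theorem backward_euler_step_unique_solvability_infsup
    {V W : Type*} [NormedAddCommGroup V] [InnerProductSpace ℝ V]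
    [NormedAddCommGroup W] [InnerProductSpace ℝ W]
    [FiniteDimensional ℝ V] [FiniteDimensional ℝ W]
    (a : V →ₗ[ℝ] V →ₗ[ℝ] ℝ)
    (α : ℝ) (hα : 0 < α) (ha_coercive : ∀ v : V, α * ‖v‖ ^ 2 ≤ a v v)
    (d : W →ₗ[ℝ] W →ₗ[ℝ] ℝ) (hd_pos : ∀ q : W, 0 ≤ d q q)
    (b : V →ₗ[ℝ] W →ₗ[ℝ] ℝ)
    (β : ℝ) (hβ : 0 < β)
    (hinfsup : ∀ q : W, ∃ v : V, v ≠ 0 ∧ β * ‖v‖ * ‖q‖ ≤ b v q)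
    (c₀ : ℝ) (hc₀ : 0 ≤ c₀) (τ : ℝ) (hτ : 0 < τ) :
    ∀ (F : V →ₗ[ℝ] ℝ) (G : W →ₗ[ℝ] ℝ),
      ∃! up : V × W,
        (∀ v : V, a up.1 v - b v up.2 = F v) ∧
        (∀ q : W, c₀ * ⟪up.2, q⟫ + b up.1 q + τ * d up.2 q = G q) := by
  intro F G
  set c : W →ₗ[ℝ] W →ₗ[ℝ] ℝ := c₀ • innerₗ W + τ • d
  have hc : ∀ p, 0 ≤ c p p := fun p ↦ by
    simp only [c, LinearMap.add_apply, LinearMap.smul_apply, innerₗ_apply_apply, smul_eq_mul]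
    exact add_nonneg (mul_nonneg hc₀ real_inner_self_nonneg) (mul_nonneg hτ.le (hd_pos p))
  have hS := saddlePointOperator_bijective (pos_of_coercive hα ha_coercive) hc
    (flip_injective_of_infsup hβ hinfsup)
  refine (existsUnique_congr fun up ↦ ?_).mp (hS.existsUnique (F, G))
  simp only [saddlePointOperator_apply, Prod.ext_iff, LinearMap.ext_iff, c, LinearMap.sub_apply,
    LinearMap.add_apply, LinearMap.smul_apply, LinearMap.flip_apply, innerₗ_apply_apply,
    smul_eq_mul]
  refine and_congr Iff.rfl (forall_congr' fun q ↦ ?_)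
  rw [add_left_comm, ← add_assoc]
end
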